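/- Let (Ω,M) be a finite transitive transformation monoid and K a field of characteristic zero. Give the space of functions v : Ω → K the right M-action (v·m)(ω) = Σ_{α : αm = ω} v(α) (the linear extension of the action of M on the basis Ω of KΩ). Then there exists a nonzero v with v·m = v for all m ∈ M if and only if every element of M is a bijection of Ω (i.e., M is a group). -/
import Mathlib

open Finset

private lemma exists_idem_iterate {Ω : Type*} [Finite Ω] (f : Ω → Ω) :
    ∃ k, 1 ≤ k ∧ ∀ x, f^[k] (f^[k] x) = f^[k] x := by
  obtain ⟨a, b, hab, hfe⟩ :=
    Finite.exists_ne_map_eq_of_infinite (fun n : ℕ => f^[n + 1])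
  wlog hlt : a < b generalizing a b
  · exact this b a hab.symm hfe.symm (by omega)
  set i := a + 1 with hi
  set j := b + 1 with hj
  have hij : f^[i] = f^[j] := hfe
  set p := j - i with hp
  have hp1 : 1 ≤ p := by omega
  have step : ∀ n, i ≤ n → f^[n + p] = f^[n] := by
    intro n hn
    have h1 : n + p = (n - i) + j := by omega
    have h2 : n = (n - i) + i := by omega
    rw [h1, Function.iterate_add, ← hij, ← Function.iterate_add, ← h2]
  have steps : ∀ s n, i ≤ n → f^[n + s * p] = f^[n] := by
    intro s
    induction s with
    | zero => simp
    | succ s ih =>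
      intro n hn
      have : n + (s + 1) * p = (n + p) + s * p := by ring
      rw [this, ih (n + p) (by omega), step n hn]
  refine ⟨(i + 1) * p, by nlinarith, fun x => ?_⟩
  have hk : i ≤ (i + 1) * p := by nlinarith
  have := steps (i + 1) ((i + 1) * p) hk
  calc f^[(i+1)*p] (f^[(i+1)*p] x) = f^[(i+1)*p + (i+1)*p] x := by
        rw [Function.iterate_add_apply]
    _ = f^[(i+1)*p] x := by rw [this]

/-- Let `(Ω, M)` be a finite transitive transformation monoid and `K`
a field of characteristic zero.  Give `KΩ` (functions `v : Ω → K`) the right `M`-action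
`(v·m)(ω) = ∑_{α : αm = ω} v α`.  Then there is a nonzero `M`-fixed vector iff every
element of `M` is a bijection of `Ω` (i.e. `M` is a group). -/
theorem exists_invariant_vector_iff_group {Ω K : Type*} [Fintype Ω] [DecidableEq Ω]
    [Nonempty Ω] [Field K] [CharZero K]
    (S : Set (Ω → Ω)) (hid : id ∈ S) (hcomp : ∀ m ∈ S, ∀ n ∈ S, n ∘ m ∈ S)
    (htrans : ∀ α β : Ω, ∃ m ∈ S, m α = β) :
    (∃ v : Ω → K, v ≠ 0 ∧
      ∀ m ∈ S, (fun ω : Ω => ∑ α : Ω, if m α = ω then v α else 0) = v) ↔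
    ∀ m ∈ S, Function.Bijective m := by
  constructor
  · rintro ⟨v, hv0, hfix⟩
    -- pointwise fixed equation
    have hfix' : ∀ m ∈ S, ∀ ω, (∑ α : Ω, if m α = ω then v α else 0) = v ω := by
      intro m hm ω; exact congrFun (hfix m hm) ω
    -- support of v is contained in the range of every element of S
    have hsupp : ∀ n ∈ S, ∀ ω, v ω ≠ 0 → ∃ α, n α = ω := by
      intro n hn ω hω
      by_contra h
      push_neg at h
      have := hfix' n hn ω
      rw [Finset.sum_eq_zero (fun α _ => by simp [h α])] at this
      exact hω this.symm
    -- iterates stay in S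
    have hiter : ∀ f ∈ S, ∀ k : ℕ, f^[k] ∈ S := by
      intro f hf k
      induction k with
      | zero => simpa using hid
      | succ k ih =>
        rw [Function.iterate_succ']
        exact hcomp _ ih f hf
    -- choose f of minimal rank
    classical
    set rank : (Ω → Ω) → ℕ := fun g => #(univ.image g) with hrank
    have hSne : (univ.filter (· ∈ S)).Nonempty := ⟨id, by simpa using hid⟩
    obtain ⟨f, hfS, hfmin⟩ := Finset.exists_min_image (univ.filter (· ∈ S)) rank hSne
    rw [Finset.mem_filter] at hfS
    have hfS : f ∈ S := hfS.2
    have hfmin : ∀ g ∈ S, rank f ≤ rank g := by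
      intro g hg
      exact hfmin g (by simpa using hg)
    -- idempotent power e
    obtain ⟨k, hk1, hkid⟩ := exists_idem_iterate f
    set e : Ω → Ω := f^[k] with he'
    have heS : e ∈ S := hiter f hfS k
    have heid : ∀ x, e (e x) = e x := hkid
    set Y : Finset Ω := univ.image e with hY
    have hmemY : ∀ x, e x ∈ Y := fun x => Finset.mem_image_of_mem e (mem_univ x)
    have hYfix : ∀ y ∈ Y, e y = y := by
      intro y hy
      obtain ⟨x, -, rfl⟩ := Finset.mem_image.1 hy
      exact heid x
    -- e has minimal rank, namely #Y ≤ rank g for all g ∈ S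
    have hYmin : ∀ g ∈ S, #Y ≤ rank g := by
      intro g hg
      have h1 : #Y ≤ rank f := by
        apply Finset.card_le_card
        intro y hy
        obtain ⟨x, -, rfl⟩ := Finset.mem_image.1 hy
        obtain ⟨k', hk'⟩ : ∃ k', k = k' + 1 := ⟨k - 1, by omega⟩
        show f^[k] x ∈ image f univ
        rw [hk', Function.iterate_succ', Function.comp_apply]
        exact Finset.mem_image_of_mem f (mem_univ _)
      exact h1.trans (hfmin g hg)
    -- v vanishes off Y
    have hvY : ∀ ω, ω ∉ Y → v ω = 0 := by
      intro ω hω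
      by_contra h
      obtain ⟨α, hα⟩ := hsupp e heS ω h
      exact hω (hα ▸ hmemY α)
    -- v is constant on Y
    have hconst : ∀ y ∈ Y, ∀ y' ∈ Y, v y' = v y := by
      intro y hy y' hy'
      obtain ⟨n, hnS, hny⟩ := htrans y y'
      set g : Ω → Ω := e ∘ n ∘ e with hg
      have hgS : g ∈ S := hcomp _ (hcomp e heS n hnS) e heS
      have hgY : ∀ x, g x ∈ Y := fun x => hmemY _
      have hgimg : univ.image g = Y := by
        apply Finset.eq_of_subset_of_card_le
        · intro z hz
          obtain ⟨x, -, rfl⟩ := Finset.mem_image.1 hz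
          exact hgY x
        · exact hYmin g hgS
      -- g restricted to Y is surjective onto Y
      have hgsurj : ∀ z ∈ Y, ∃ α, α ∈ Y ∧ g α = z := by
        intro z hz
        rw [← hgimg] at hz
        obtain ⟨x, -, rfl⟩ := Finset.mem_image.1 hz
        refine ⟨e x, hmemY x, ?_⟩
        simp only [hg, Function.comp_apply, heid]
      -- hence injective on Y
      have hginj : ∀ a₁ ∈ Y, ∀ a₂ ∈ Y, g a₁ = g a₂ → a₁ = a₂ := by
        intro a₁ h₁ a₂ h₂ hgg
        exact Finset.inj_on_of_surj_on_of_card_le (fun a _ => g a)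
          (fun a ha => hgY a) (fun b hb => by
            obtain ⟨α, hα, hα'⟩ := hgsurj b hb; exact ⟨α, hα, hα'⟩) le_rfl h₁ h₂ hgg
      have hgyy' : g y = y' := by
        simp only [hg, Function.comp_apply, hYfix y hy, hny, hYfix y' hy']
      have := hfix' g hgS y'
      rw [Finset.sum_eq_single y] at this
      · rw [← this, if_pos hgyy']
      · intro b _ hb
        by_cases hgb : g b = y'
        · rw [if_pos hgb]
          by_contra hvb
          have hbY : b ∈ Y := by
            by_contra hbY; exact hvb (hvY b hbY)
          exact hb (hginj b hbY y hy (hgb.trans hgyy'.symm))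
        · rw [if_neg hgb]
      · intro hyu; exact absurd (mem_univ y) hyu
    -- v nonzero somewhere, and that point is in Y
    obtain ⟨ω₁, hω₁⟩ : ∃ ω, v ω ≠ 0 := by
      by_contra h; push_neg at h
      exact hv0 (funext fun ω => h ω)
    have hω₁Y : ω₁ ∈ Y := by
      by_contra h; exact hω₁ (hvY ω₁ h)
    set c : K := v ω₁ with hc
    have hcne : c ≠ 0 := hω₁
    have hvconst : ∀ y ∈ Y, v y = c := fun y hy => hconst ω₁ hω₁Y y hy
    -- Y = univ
    have hYuniv : Y = univ := by
      by_contra h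
      obtain ⟨ω₀, hω₀⟩ : ∃ ω₀, ω₀ ∉ Y := by
        by_contra h'; push_neg at h'
        exact h (Finset.eq_univ_of_forall h')
      obtain ⟨n, hnS, hnω⟩ := htrans ω₁ ω₀
      have h0 : v ω₀ = 0 := hvY ω₀ hω₀
      have hsum := hfix' n hnS ω₀
      rw [h0] at hsum
      -- rewrite the sum as c times a cardinality
      have hterm : ∀ α : Ω, (if n α = ω₀ then v α else 0)
          = if n α = ω₀ ∧ α ∈ Y then c else 0 := by
        intro α
        by_cases h1 : n α = ω₀
        · by_cases h2 : α ∈ Y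
          · simp [h1, h2, hvconst α h2]
          · simp [h1, h2, hvY α h2]
        · simp [h1]
      rw [Finset.sum_congr rfl (fun α _ => hterm α), ← Finset.sum_filter,
        Finset.sum_const, nsmul_eq_mul] at hsum
      have hmem : ω₁ ∈ univ.filter (fun α => n α = ω₀ ∧ α ∈ Y) := by
        simp [hnω, hω₁Y]
      have hcard : (0 : ℕ) < #(univ.filter (fun α => n α = ω₀ ∧ α ∈ Y)) :=
        Finset.card_pos.2 ⟨ω₁, hmem⟩
      rcases mul_eq_zero.1 hsum with h' | h'
      · have : #(univ.filter (fun α => n α = ω₀ ∧ α ∈ Y)) = 0 := by exact_mod_cast h'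
        omega
      · exact hcne h'
    -- so v is the nonzero constant c; conclude bijectivity
    intro m hm
    have hfiber : ∀ ω, #(univ.filter (fun α => m α = ω)) = 1 := by
      intro ω
      have hsum := hfix' m hm ω
      have hωY : ω ∈ Y := hYuniv ▸ mem_univ ω
      have hvc : ∀ α : Ω, v α = c := fun α => hvconst α (hYuniv ▸ mem_univ α)
      rw [hvc ω] at hsum
      have : (∑ α : Ω, if m α = ω then v α else 0)
          = (#(univ.filter (fun α => m α = ω)) : K) * c := by
        rw [Finset.sum_congr rfl (fun α _ => by rw [hvc α]), ← Finset.sum_filter,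
          Finset.sum_const, nsmul_eq_mul]
      rw [this] at hsum
      have h1 : ((#(univ.filter (fun α => m α = ω)) : K)) = 1 := by
        have := mul_right_cancel₀ hcne (hsum.trans (one_mul c).symm)
        exact this
      exact_mod_cast h1
    constructor
    · intro a b hab
      have h1 := hfiber (m a)
      obtain ⟨x, hx⟩ := Finset.card_eq_one.1 h1
      have ha : a ∈ univ.filter (fun α => m α = m a) := by simp
      have hb : b ∈ univ.filter (fun α => m α = m a) := by simp [hab]
      rw [hx, Finset.mem_singleton] at ha hb
      rw [ha, hb]
    · intro ω
      have h1 := hfiber ω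
      have : (univ.filter (fun α => m α = ω)).Nonempty := by
        rw [← Finset.card_pos, h1]; omega
      obtain ⟨α, hα⟩ := this
      exact ⟨α, (Finset.mem_filter.1 hα).2⟩
  · intro hbij
    refine ⟨fun _ => 1, ?_, ?_⟩
    · intro h
      have := congrFun h (Classical.arbitrary Ω)
      simp at this
    · intro m hm
      funext ω
      obtain ⟨α, hα⟩ := (hbij m hm).2 ω
      rw [Finset.sum_eq_single α]
      · rw [if_pos hα]
      · intro b _ hb
        rw [if_neg]
        intro h
        exact hb ((hbij m hm).1 (h.trans hα.symm))
      · intro h; exact absurd (mem_univ α) h
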